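/- Combined error bound (Theorem 1, abstract form): let ‖·‖_σ be the scaled ℓ₂ norm on ℝⁿ, Π an orthogonal projection, T a γ-contraction (γ ∈ [0,1)) under ‖·‖_σ, Q ∈ ℝⁿ, and Q̂_s the unique fixed point of Π∘T̂ for an approximate operator T̂ which is also a γ-contraction. Suppose (i) ‖ΠT̂Q − ΠQ‖_σ ≤ e_t, and (ii) ‖T̂Q̂ − TQ̂‖_∞ ≤ e_o componentwise for the relevant vector, so that ‖Q̂_s − Q̂‖_σ ≤ ‖Π(T̂ − T)(·)‖_σ ≤ e_o′ where Q̂ = ΠTΦθ*. Then ‖Q − Q̂‖_σ ≤ (1/√(1−γ²))‖Q − ΠQ‖_σ + e_t/(1−γ) + e_o′. -/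

import Mathlib

/-!
Write `Q̂ₛ = Π T̂ Q̂ₛ`. Since `Q - ΠQ` is orthogonal to the range of `Π`, Pythagoras gives
`‖Q - Q̂ₛ‖² = ‖Q - ΠQ‖² + ‖ΠQ - Q̂ₛ‖²`, and `ΠQ - Q̂ₛ = (ΠQ - ΠT̂Q) + Π(T̂Q - T̂Q̂ₛ)` has norm at
most `eₜ + γ‖Q - Q̂ₛ‖` because `Π` is nonexpansive and `T̂` a contraction. Solving the resulting
quadratic inequality `s² ≤ d² + (eₜ + γ s)²` for `s = ‖Q - Q̂ₛ‖`, `d = ‖Q - ΠQ‖` bounds `s` by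
`d / √(1 - γ²) + eₜ / (1 - γ)`, and the triangle inequality through `Q̂ₛ` adds `e_o′`.
-/

open scoped InnerProductSpace

/-- σ-norm on ℝⁿ: ‖y‖_σ = √((1/n)‖y‖₂²). -/
noncomputable def sigmaNorm (n : ℕ) (y : EuclideanSpace ℝ (Fin n)) : ℝ :=
  Real.sqrt ((1 / (n : ℝ)) * ‖y‖ ^ 2)

section Projection

variable {E : Type*} [NormedAddCommGroup E] [InnerProductSpace ℝ E] {Pi : E →ₗ[ℝ] E}

theorem norm_sub_map_sq_eq (horth : ∀ y z, ⟪y - Pi y, Pi z⟫_ℝ = 0) (y z : E) :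
    ‖y - Pi z‖ ^ 2 = ‖y - Pi y‖ ^ 2 + ‖Pi y - Pi z‖ ^ 2 := by
  have h := norm_add_sq_eq_norm_sq_add_norm_sq_real (x := y - Pi y) (y := Pi y - Pi z)
    (by rw [← map_sub]; exact horth y (y - z))
  rw [sub_add_sub_cancel] at h
  simpa only [sq] using h

theorem norm_map_le (horth : ∀ y z, ⟪y - Pi y, Pi z⟫_ℝ = 0) (y : E) : ‖Pi y‖ ≤ ‖y‖ := by
  have h := norm_sub_map_sq_eq horth y 0
  rw [map_zero, sub_zero, sub_zero] at h
  refine (pow_le_pow_iff_left₀ (norm_nonneg _) (norm_nonneg _) two_ne_zero).1 ?_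
  rw [h]
  exact le_add_of_nonneg_left (sq_nonneg _)

end Projection

section SigmaNorm

variable {n : ℕ}

theorem sigmaNorm_eq (y : EuclideanSpace ℝ (Fin n)) :
    sigmaNorm n y = Real.sqrt (1 / (n : ℝ)) * ‖y‖ := by
  rw [sigmaNorm, Real.sqrt_mul (by positivity), Real.sqrt_sq (norm_nonneg _)]

theorem sigmaNorm_nonneg (y : EuclideanSpace ℝ (Fin n)) : 0 ≤ sigmaNorm n y :=
  Real.sqrt_nonneg _

theorem sigmaNorm_sq (y : EuclideanSpace ℝ (Fin n)) :
    sigmaNorm n y ^ 2 = 1 / (n : ℝ) * ‖y‖ ^ 2 :=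
  Real.sq_sqrt (by positivity)

theorem sigmaNorm_le_of_norm_le {y z : EuclideanSpace ℝ (Fin n)} (h : ‖y‖ ≤ ‖z‖) :
    sigmaNorm n y ≤ sigmaNorm n z := by
  rw [sigmaNorm_eq, sigmaNorm_eq]
  exact mul_le_mul_of_nonneg_left h (Real.sqrt_nonneg _)

theorem sigmaNorm_sub_comm (y z : EuclideanSpace ℝ (Fin n)) :
    sigmaNorm n (y - z) = sigmaNorm n (z - y) := by
  rw [sigmaNorm_eq, sigmaNorm_eq, norm_sub_rev]

theorem sigmaNorm_sub_le_sub_add_sub (x y z : EuclideanSpace ℝ (Fin n)) :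
    sigmaNorm n (x - z) ≤ sigmaNorm n (x - y) + sigmaNorm n (y - z) := by
  rw [sigmaNorm_eq, sigmaNorm_eq, sigmaNorm_eq, ← mul_add]
  exact mul_le_mul_of_nonneg_left (norm_sub_le_norm_sub_add_norm_sub x y z) (Real.sqrt_nonneg _)

variable {Pi : EuclideanSpace ℝ (Fin n) →ₗ[ℝ] EuclideanSpace ℝ (Fin n)}

theorem sigmaNorm_sub_map_sq_eq (horth : ∀ y z, ⟪y - Pi y, Pi z⟫_ℝ = 0) (y z) :
    sigmaNorm n (y - Pi z) ^ 2 = sigmaNorm n (y - Pi y) ^ 2 + sigmaNorm n (Pi y - Pi z) ^ 2 := by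
  rw [sigmaNorm_sq, sigmaNorm_sq, sigmaNorm_sq, norm_sub_map_sq_eq horth, mul_add]

theorem sigmaNorm_map_le (horth : ∀ y z, ⟪y - Pi y, Pi z⟫_ℝ = 0) (y) :
    sigmaNorm n (Pi y) ≤ sigmaNorm n y :=
  sigmaNorm_le_of_norm_le (norm_map_le horth y)

theorem sigmaNorm_sub_fixedPt_sq_le {γ : ℝ} (horth : ∀ y z, ⟪y - Pi y, Pi z⟫_ℝ = 0)
    {F : EuclideanSpace ℝ (Fin n) → EuclideanSpace ℝ (Fin n)}
    (hF : ∀ x y, sigmaNorm n (F x - F y) ≤ γ * sigmaNorm n (x - y))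
    {Qs : EuclideanSpace ℝ (Fin n)} (hfix : Pi (F Qs) = Qs) (Q : EuclideanSpace ℝ (Fin n)) :
    sigmaNorm n (Q - Qs) ^ 2 ≤
      sigmaNorm n (Q - Pi Q) ^ 2 +
        (sigmaNorm n (Pi (F Q) - Pi Q) + γ * sigmaNorm n (Q - Qs)) ^ 2 := by
  have hpyth := sigmaNorm_sub_map_sq_eq horth Q (F Qs)
  rw [hfix] at hpyth
  have hstep : sigmaNorm n (Pi Q - Qs) ≤
      sigmaNorm n (Pi (F Q) - Pi Q) + γ * sigmaNorm n (Q - Qs) := calc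
    sigmaNorm n (Pi Q - Qs)
        ≤ sigmaNorm n (Pi Q - Pi (F Q)) + sigmaNorm n (Pi (F Q) - Pi (F Qs)) := by
      simpa only [hfix] using sigmaNorm_sub_le_sub_add_sub (Pi Q) (Pi (F Q)) (Pi (F Qs))
    _ ≤ sigmaNorm n (Pi (F Q) - Pi Q) + γ * sigmaNorm n (Q - Qs) := by
      rw [sigmaNorm_sub_comm (Pi Q), ← map_sub Pi (F Q) (F Qs)]
      exact add_le_add_right ((sigmaNorm_map_le horth _).trans (hF Q Qs)) _
  rw [hpyth]
  gcongr
  exact sigmaNorm_nonneg _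

end SigmaNorm

theorem le_add_of_sq_le {γ a b s : ℝ} (hγ₀ : -1 < γ) (hγ₁ : γ < 1) (ha : 0 ≤ a) (hb : 0 ≤ b)
    (h : s ^ 2 ≤ (1 - γ ^ 2) * a ^ 2 + ((1 - γ) * b + γ * s) ^ 2) : s ≤ a + b := by
  by_contra! hs
  have hu : 0 < 1 - γ := sub_pos.2 hγ₁
  have hr : 0 < 1 - γ ^ 2 := by nlinarith
  -- at `t = a + b` the quadratic `x ↦ (1 - γ²) x² - 2γ(1 - γ) b x - (1 - γ)² b² - (1 - γ²) a²`
  -- takes the value `2(1 - γ) a b ≥ 0` and it increases to the right of `t`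
  nlinarith [mul_pos hr (pow_pos (sub_pos.2 hs) 2), mul_nonneg hu.le (mul_nonneg ha hb),
    mul_nonneg (mul_nonneg hu.le (sub_pos.2 hs).le)
      (add_nonneg (mul_nonneg (by linarith : (0 : ℝ) ≤ 1 + γ) ha) hb)]

theorem le_div_sqrt_add_div_of_sq_le {γ d e s : ℝ} (hγ₀ : -1 < γ) (hγ₁ : γ < 1)
    (hd : 0 ≤ d) (he : 0 ≤ e) (h : s ^ 2 ≤ d ^ 2 + (e + γ * s) ^ 2) :
    s ≤ d / Real.sqrt (1 - γ ^ 2) + e / (1 - γ) := by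
  have hr : 0 < 1 - γ ^ 2 := by nlinarith
  have hu : 1 - γ ≠ 0 := (sub_pos.2 hγ₁).ne'
  apply le_add_of_sq_le hγ₀ hγ₁ (by positivity) (div_nonneg he (sub_pos.2 hγ₁).le)
  rwa [div_pow, Real.sq_sqrt hr.le, mul_div_cancel₀ _ hr.ne', mul_div_cancel₀ _ hu]

theorem stmt19_general (n : ℕ) (γ et eo' : ℝ) (hγ0 : 0 ≤ γ) (hγ1 : γ < 1)
    (het : 0 ≤ et)
    (Pi : EuclideanSpace ℝ (Fin n) →ₗ[ℝ] EuclideanSpace ℝ (Fin n))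
    (horth : ∀ y z, ⟪y - Pi y, Pi z⟫_ℝ = 0)
    (That : EuclideanSpace ℝ (Fin n) → EuclideanSpace ℝ (Fin n))
    (hThat : ∀ Q₁ Q₂, sigmaNorm n (That Q₁ - That Q₂) ≤ γ * sigmaNorm n (Q₁ - Q₂))
    (Qs Qhat Q : EuclideanSpace ℝ (Fin n))
    (hfix : Pi (That Qs) = Qs)
    (h_et : sigmaNorm n (Pi (That Q) - Pi Q) ≤ et)
    (h_eo : sigmaNorm n (Qs - Qhat) ≤ eo') :
    sigmaNorm n (Q - Qhat) ≤
      sigmaNorm n (Q - Pi Q) / Real.sqrt (1 - γ ^ 2) + et / (1 - γ) + eo' := by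
  have hquad : sigmaNorm n (Q - Qs) ^ 2 ≤
      sigmaNorm n (Q - Pi Q) ^ 2 + (et + γ * sigmaNorm n (Q - Qs)) ^ 2 := by
    refine (sigmaNorm_sub_fixedPt_sq_le horth hThat hfix Q).trans ?_
    gcongr
    exact add_nonneg (sigmaNorm_nonneg _) (mul_nonneg hγ0 (sigmaNorm_nonneg _))
  calc sigmaNorm n (Q - Qhat) ≤ sigmaNorm n (Q - Qs) + sigmaNorm n (Qs - Qhat) :=
        sigmaNorm_sub_le_sub_add_sub Q Qs Qhat
    _ ≤ _ := add_le_add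
        (le_div_sqrt_add_div_of_sq_le (by linarith) hγ1 (sigmaNorm_nonneg _) het hquad) h_eo

/-- Combined error bound (Theorem 1, abstract form): with Π an orthogonal projection,
T and T̂ γ-contractions in ‖·‖_σ, Q̂_s the fixed point of Π∘T̂, and the error bounds
‖ΠT̂Q − ΠQ‖_σ ≤ e_t and ‖Q̂_s − Q̂‖_σ ≤ e_o′, we get
‖Q − Q̂‖_σ ≤ ‖Q − ΠQ‖_σ/√(1−γ²) + e_t/(1−γ) + e_o′. -/
theorem stmt19 (n : ℕ) (γ et eo' : ℝ) (hγ0 : 0 ≤ γ) (hγ1 : γ < 1)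
    (het : 0 ≤ et) (heo : 0 ≤ eo')
    (Pi : EuclideanSpace ℝ (Fin n) →ₗ[ℝ] EuclideanSpace ℝ (Fin n))
    (hidem : ∀ y, Pi (Pi y) = Pi y)
    (horth : ∀ y z, ⟪y - Pi y, Pi z⟫_ℝ = 0)
    (T That : EuclideanSpace ℝ (Fin n) → EuclideanSpace ℝ (Fin n))
    (hT : ∀ Q₁ Q₂, sigmaNorm n (T Q₁ - T Q₂) ≤ γ * sigmaNorm n (Q₁ - Q₂))
    (hThat : ∀ Q₁ Q₂, sigmaNorm n (That Q₁ - That Q₂) ≤ γ * sigmaNorm n (Q₁ - Q₂))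
    (Qs Qhat Q : EuclideanSpace ℝ (Fin n))
    (hfix : Pi (That Qs) = Qs)
    (h_et : sigmaNorm n (Pi (That Q) - Pi Q) ≤ et)
    (h_eo : sigmaNorm n (Qs - Qhat) ≤ eo') :
    sigmaNorm n (Q - Qhat) ≤
      sigmaNorm n (Q - Pi Q) / Real.sqrt (1 - γ ^ 2) + et / (1 - γ) + eo' :=
  stmt19_general n γ et eo' hγ0 hγ1 het Pi horth That hThat Qs Qhat Q hfix h_et h_eo
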